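/- arXiv:2107.07292 — 4 statements merged into one kernel-verified Lean document; each statement's English description precedes it below -/
import Mathlib

section
/- Let $a : [0,T] \to \mathbb{R}$ be $C^1$ with $-a_+ \leq a(t) \leq -a_- < 0$ and $|a'(t)| \leq C$ for all $t \in [0,T]$, and let $\mu \geq 0$, $\varepsilon > 0$. Define $a_\mu(t) = -\mu + a(t)$ and $\alpha_\mu(t, t_1) = \int_{t_1}^t a_\mu(u)\,du$. Then $\frac{1}{\varepsilon} \int_0^t e^{2\alpha_\mu(t,t_1)/\varepsilon}\, dt_1 \leq \frac{1}{2(\mu + a_-)}\left(1 + \frac{C \varepsilon}{2(\mu+a_-)^2}\right)$ for all $t \in [0,T]$. -/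
/-!
Since `a_μ ≤ -(μ + a₋)` on `[0, T]`, we have `α_μ(t, t₁) ≤ -(μ + a₋)(t - t₁)`, so the integrand is
dominated by `e^{-2(μ + a₋)(t - t₁)/ε}`, whose integral over `[0, t]` is at most `ε / (2(μ + a₋))`.
This already gives the bound `1 / (2(μ + a₋))`, and the correction factor `1 + Cε/(2(μ + a₋)²)` is
at least `1` because `C ≥ |a'(t)| ≥ 0`.
-/

open Real Set MeasureTheory

theorem intervalIntegral.integral_le_mul_sub_of_le {f : ℝ → ℝ} {s t m : ℝ} (hst : s ≤ t)
    (hf : IntervalIntegrable f volume s t) (h : ∀ u ∈ Icc s t, f u ≤ m) :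
    ∫ u in s..t, f u ≤ m * (t - s) := by
  calc ∫ u in s..t, f u ≤ ∫ _ in s..t, m :=
        intervalIntegral.integral_mono_on hst hf intervalIntegrable_const h
    _ = m * (t - s) := by rw [intervalIntegral.integral_const, smul_eq_mul, mul_comm]

theorem integral_exp_mul_sub_le_inv {c : ℝ} (hc : 0 < c) (a t : ℝ) :
    ∫ s in a..t, exp (c * s - c * t) ≤ c⁻¹ := by
  rw [intervalIntegral.integral_comp_mul_sub (fun x => exp x) hc.ne', integral_exp, sub_self,
    exp_zero, smul_eq_mul]
  exact mul_le_of_le_one_right (inv_pos.2 hc).le (sub_le_self _ (exp_pos _).le)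

theorem integral_exp_integral_le {f : ℝ → ℝ} {k ε t₀ t : ℝ} (hk : 0 < k) (hε : 0 < ε)
    (ht : t₀ ≤ t) (hf : IntervalIntegrable f volume t₀ t) (hfk : ∀ u ∈ Icc t₀ t, f u ≤ -k) :
    (1 / ε) * ∫ s in t₀..t, exp (2 * (∫ u in s..t, f u) / ε) ≤ 1 / (2 * k) := by
  set c := 2 * k / ε
  have hc : 0 < c := by positivity
  have hexp : ∀ s ∈ Ioc t₀ t, exp (2 * (∫ u in s..t, f u) / ε) ≤ exp (c * s - c * t) := by
    intro s hs
    have hα : ∫ u in s..t, f u ≤ -k * (t - s) :=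
      intervalIntegral.integral_le_mul_sub_of_le hs.2
        (hf.mono_set (uIcc_subset_uIcc_right (mem_uIcc_of_le hs.1.le hs.2)))
        fun u hu => hfk u ⟨hs.1.le.trans hu.1, hu.2⟩
    gcongr
    rw [div_le_iff₀ hε]
    calc 2 * ∫ u in s..t, f u ≤ 2 * (-k * (t - s)) := by gcongr
      _ = (c * s - c * t) * ε := by simp only [c]; field_simp; ring
  -- Only the dominating side needs to be integrable, as the integrand is nonnegative.
  have hmono : ∫ s in t₀..t, exp (2 * (∫ u in s..t, f u) / ε)
      ≤ ∫ s in t₀..t, exp (c * s - c * t) := by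
    simp only [intervalIntegral.integral_of_le ht]
    refine integral_mono_of_nonneg (ae_of_all _ fun s => (exp_pos _).le) ?_
      ((ae_restrict_iff' measurableSet_Ioc).2 (ae_of_all _ hexp))
    exact (by fun_prop : Continuous fun s => exp (c * s - c * t)).integrableOn_Ioc
  calc (1 / ε) * ∫ s in t₀..t, exp (2 * (∫ u in s..t, f u) / ε)
      ≤ (1 / ε) * c⁻¹ := by gcongr; exact hmono.trans (integral_exp_mul_sub_le_inv hc t₀ t)
    _ = 1 / (2 * k) := by simp only [c]; field_simp

theorem stmt_6_general (T ε μ aminus aplus C : ℝ) (hε : 0 < ε) (hμ : 0 ≤ μ)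
    (haminus : 0 < aminus) (a : ℝ → ℝ) (ha : ContDiff ℝ 1 a)
    (hbound : ∀ t ∈ Set.Icc 0 T, -aplus ≤ a t ∧ a t ≤ -aminus)
    (hderiv : ∀ t ∈ Set.Icc 0 T, |deriv a t| ≤ C) :
    ∀ t ∈ Set.Icc 0 T,
      (1/ε) * ∫ t1 in (0:ℝ)..t, Real.exp (2 * (∫ u in t1..t, (-μ + a u)) / ε)
        ≤ 1 / (2 * (μ + aminus)) * (1 + C * ε / (2 * (μ + aminus)^2)) := by
  intro t ht
  have hk : 0 < μ + aminus := by positivity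
  have hC : 0 ≤ C := (abs_nonneg _).trans (hderiv t ht)
  have hdecay : ∀ u ∈ Icc 0 t, -μ + a u ≤ -(μ + aminus) := fun u hu => by
    linarith [(hbound u ⟨hu.1, hu.2.trans ht.2⟩).2]
  calc (1/ε) * ∫ t1 in (0:ℝ)..t, Real.exp (2 * (∫ u in t1..t, (-μ + a u)) / ε)
      ≤ 1 / (2 * (μ + aminus)) :=
        integral_exp_integral_le hk hε ht.1
          ((continuous_const.add ha.continuous).intervalIntegrable 0 t) hdecay
    _ ≤ 1 / (2 * (μ + aminus)) * (1 + C * ε / (2 * (μ + aminus)^2)) :=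
        le_mul_of_one_le_right (by positivity) (le_add_of_nonneg_right (by positivity))

/-- Variance bound for a Fourier mode of the linearised SPDE: with
`a_μ(t) = -μ + a(t)` and `α_μ(t,t₁) = ∫_{t₁}^t a_μ(u) du`, one has
`(1/ε) ∫₀^t e^{2α_μ(t,t₁)/ε} dt₁ ≤ (1/(2(μ+a₋)))(1 + Cε/(2(μ+a₋)²))`. -/
theorem stmt_6 (T ε μ aminus aplus C : ℝ) (hT : 0 ≤ T) (hε : 0 < ε) (hμ : 0 ≤ μ)
    (haminus : 0 < aminus) (a : ℝ → ℝ) (ha : ContDiff ℝ 1 a)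
    (hbound : ∀ t ∈ Set.Icc 0 T, -aplus ≤ a t ∧ a t ≤ -aminus)
    (hderiv : ∀ t ∈ Set.Icc 0 T, |deriv a t| ≤ C) :
    ∀ t ∈ Set.Icc 0 T,
      (1/ε) * ∫ t1 in (0:ℝ)..t, Real.exp (2 * (∫ u in t1..t, (-μ + a u)) / ε)
        ≤ 1 / (2 * (μ + aminus)) * (1 + C * ε / (2 * (μ + aminus)^2)) :=
  stmt_6_general T ε μ aminus aplus C hε hμ haminus a ha hbound hderiv
end

section
/- Let $a : [t_0, t] \to \mathbb{R}$ be continuous and negative, let $\varepsilon > 0$, $\alpha(t, t_1) = \int_{t_1}^t a(u)\,du$, and let $C \geq 0$ satisfy $|g(t_1)| \leq C$ for all $t_1$. Then $\left| \frac{1}{\varepsilon} \int_{t_0}^t e^{\alpha(t,t_1)/\varepsilon} g(t_1)\, dt_1 \right| \leq C \sup_{u \in [t_0,t]} \frac{1}{|a(u)|}$. -/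
/-!
Write `α(s) = ∫_s^t a`. Since `-a ≥ 1 / sup (1/|a|)` on `[t₀, t]`, the integrand is dominated by
`C · sup (1/|a|) · e^{α(s)/ε} (-a(s))`, and `ε e^{α(s)/ε}` is a primitive of `e^{α(s)/ε} (-a(s))`,
so the weight integrates to `ε (1 - e^{α(t₀)/ε}) ≤ ε`.
-/

open Set Real intervalIntegral

theorem IsCompact.le_biSup_of_continuousOn {X : Type*} [TopologicalSpace X] {s : Set X}
    (hs : IsCompact s) {f : X → ℝ} (hf : ContinuousOn f s) {x : X} (hx : x ∈ s) :
    f x ≤ ⨆ u ∈ s, f u :=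
  le_ciSup₂ (f := fun u (_ : u ∈ s) => f u)
    ((hs.bddAbove_image hf).mono (by rintro _ ⟨_, ⟨u, rfl⟩, hu, rfl⟩; exact ⟨u, hu, rfl⟩)) x hx

section DuhamelKernel

variable {a : ℝ → ℝ} {t₀ t ε : ℝ}

theorem hasDerivAt_exp_integral_left_div (ha : ContinuousOn a (Icc t₀ t)) {s : ℝ}
    (hs : s ∈ Ioo t₀ t) :
    HasDerivAt (fun r => ε * exp ((∫ u in r..t, a u) / ε))
      (ε * (exp ((∫ u in s..t, a u) / ε) * (-a s / ε))) s := by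
  have hint : IntervalIntegrable a MeasureTheory.volume s t :=
    (ha.mono (uIcc_subset_Icc (Ioo_subset_Icc_self hs) (right_mem_Icc.2 (hs.1.trans hs.2).le)))
      |>.intervalIntegrable
  have hcont : ContinuousAt a s := ha.continuousAt (Icc_mem_nhds hs.1 hs.2)
  have hmeas : StronglyMeasurableAtFilter a (nhds s) :=
    (ha.mono Ioo_subset_Icc_self).stronglyMeasurableAtFilter isOpen_Ioo s hs
  exact (((integral_hasDerivAt_left hint hmeas hcont).div_const ε).exp).const_mul ε

theorem continuousOn_exp_integral_left_div (ht : t₀ ≤ t) (ha : ContinuousOn a (Icc t₀ t)) :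
    ContinuousOn (fun s => exp ((∫ u in s..t, a u) / ε)) (Icc t₀ t) := by
  have hα : ContinuousOn (fun s => ∫ u in s..t, a u) (Icc t₀ t) := by
    rw [← uIcc_of_le ht]
    exact continuousOn_primitive_interval_left ((uIcc_of_le ht).symm ▸ ha.integrableOn_Icc)
  exact continuous_exp.comp_continuousOn (hα.div_const ε)

theorem intervalIntegrable_exp_integral_div_mul_neg (ht : t₀ ≤ t)
    (ha : ContinuousOn a (Icc t₀ t)) :
    IntervalIntegrable (fun s => exp ((∫ u in s..t, a u) / ε) * -a s) MeasureTheory.volume t₀ t :=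
  (((continuousOn_exp_integral_left_div ht ha).mul ha.neg).mono
    (uIcc_of_le ht).subset).intervalIntegrable

theorem integral_exp_integral_div_mul_neg (ht : t₀ ≤ t) (hε : ε ≠ 0)
    (ha : ContinuousOn a (Icc t₀ t)) :
    ∫ s in t₀..t, exp ((∫ u in s..t, a u) / ε) * -a s
      = ε * (1 - exp ((∫ u in t₀..t, a u) / ε)) := by
  have hprimitive : ContinuousOn (fun s => ε * exp ((∫ u in s..t, a u) / ε)) (Icc t₀ t) :=
    continuousOn_const.mul (continuousOn_exp_integral_left_div ht ha)
  have hderiv : ∀ s ∈ Ioo t₀ t, HasDerivWithinAt (fun s => ε * exp ((∫ u in s..t, a u) / ε))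
      (exp ((∫ u in s..t, a u) / ε) * -a s) (Ioi s) s := fun s hs =>
    (hasDerivAt_exp_integral_left_div ha hs).hasDerivWithinAt.congr_deriv (by field_simp)
  rw [integral_eq_sub_of_hasDeriv_right_of_le ht hprimitive hderiv
    (intervalIntegrable_exp_integral_div_mul_neg ht ha)]
  simp only [integral_same, zero_div, exp_zero]
  ring

theorem integral_exp_integral_div_mul_neg_le (ht : t₀ ≤ t) (hε : 0 < ε)
    (ha : ContinuousOn a (Icc t₀ t)) :
    ∫ s in t₀..t, exp ((∫ u in s..t, a u) / ε) * -a s ≤ ε := by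
  rw [integral_exp_integral_div_mul_neg ht hε.ne' ha]
  nlinarith [exp_pos ((∫ u in t₀..t, a u) / ε)]

theorem one_le_iSup_one_div_abs_mul_neg (ha : ContinuousOn a (Icc t₀ t))
    (ha_neg : ∀ u ∈ Icc t₀ t, a u < 0) {s : ℝ} (hs : s ∈ Icc t₀ t) :
    1 ≤ (⨆ u ∈ Icc t₀ t, 1 / |a u|) * -a s := by
  have hle : 1 / |a s| ≤ ⨆ u ∈ Icc t₀ t, 1 / |a u| := isCompact_Icc.le_biSup_of_continuousOn
    (continuousOn_const.div ha.abs fun u hu => (abs_pos.2 (ha_neg u hu).ne).ne') hs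
  rwa [abs_of_neg (ha_neg s hs), div_le_iff₀ (neg_pos.2 (ha_neg s hs))] at hle

end DuhamelKernel

theorem stmt_13_general (t0 t ε C : ℝ) (ht : t0 ≤ t) (hε : 0 < ε) (hC : 0 ≤ C)
    (a g : ℝ → ℝ) (ha_cont : ContinuousOn a (Set.Icc t0 t))
    (ha_neg : ∀ u ∈ Set.Icc t0 t, a u < 0)
    (hg : ∀ t1 ∈ Set.Icc t0 t, |g t1| ≤ C) :
    |(1/ε) * ∫ t1 in t0..t, Real.exp ((∫ u in t1..t, a u) / ε) * g t1|
      ≤ C * ⨆ u ∈ Set.Icc t0 t, 1 / |a u| := by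
  set M := ⨆ u ∈ Icc t0 t, 1 / |a u|
  have hM : 0 ≤ M := Real.iSup_nonneg fun u => Real.iSup_nonneg fun _ => by positivity
  set kernel := fun s => exp ((∫ u in s..t, a u) / ε)
  have hdom : ∀ s ∈ Icc t0 t, ‖kernel s * g s‖ ≤ C * M * (kernel s * -a s) := fun s hs =>
    calc ‖kernel s * g s‖ = kernel s * |g s| := by
          rw [Real.norm_eq_abs, abs_mul, abs_of_pos (exp_pos _)]
      _ ≤ kernel s * C := mul_le_mul_of_nonneg_left (hg s hs) (exp_pos _).le
      _ ≤ kernel s * C * (M * -a s) := le_mul_of_one_le_right (by positivity)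
          (one_le_iSup_one_div_abs_mul_neg ha_cont ha_neg hs)
      _ = C * M * (kernel s * -a s) := by ring
  have hbound : |∫ s in t0..t, kernel s * g s| ≤ C * M * ε :=
    calc |∫ s in t0..t, kernel s * g s|
        ≤ ∫ s in t0..t, C * M * (kernel s * -a s) :=
          norm_integral_le_of_norm_le ht (MeasureTheory.ae_of_all _
            fun s hs => hdom s (Ioc_subset_Icc_self hs))
            ((intervalIntegrable_exp_integral_div_mul_neg ht ha_cont).const_mul _)
      _ = C * M * ∫ s in t0..t, kernel s * -a s := integral_const_mul _ _
      _ ≤ C * M * ε := mul_le_mul_of_nonneg_left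
          (integral_exp_integral_div_mul_neg_le ht hε ha_cont) (mul_nonneg hC hM)
  rw [abs_mul, abs_of_pos (one_div_pos.2 hε), one_div_mul_eq_div, div_le_iff₀ hε]
  exact hbound

/-- Duhamel-integral bound: for continuous negative `a` on `[t₀,t]`,
`α(t,t₁) = ∫_{t₁}^t a(u) du` and `|g| ≤ C`, one has
`|(1/ε) ∫_{t₀}^t e^{α(t,t₁)/ε} g(t₁) dt₁| ≤ C sup_{u∈[t₀,t]} 1/|a(u)|`. -/
theorem stmt_13 (t0 t ε C : ℝ) (ht : t0 ≤ t) (hε : 0 < ε) (hC : 0 ≤ C)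
    (a g : ℝ → ℝ) (ha_cont : ContinuousOn a (Set.Icc t0 t))
    (ha_neg : ∀ u ∈ Set.Icc t0 t, a u < 0)
    (hg : ∀ t1 ∈ Set.Icc t0 t, |g t1| ≤ C) (hg_cont : ContinuousOn g (Set.Icc t0 t)) :
    |(1/ε) * ∫ t1 in t0..t, Real.exp ((∫ u in t1..t, a u) / ε) * g t1|
      ≤ C * ⨆ u ∈ Set.Icc t0 t, 1 / |a u| :=
  stmt_13_general t0 t ε C ht hε hC a g ha_cont ha_neg hg
end

section
/- Let $r, s, t \in (0, 1/2)$ with $t < r + s - 1/2$. Then there exists a constant $C = C(r,s,t) < \infty$ such that for all sequences $(\psi_k)_{k\in\mathbb{Z}}, (\phi_k)_{k\in\mathbb{Z}}$ with $\sum_k \langle k\rangle^{2r}\psi_k^2 < \infty$ and $\sum_k \langle k\rangle^{2s}\phi_k^2 < \infty$, the convolution $(\psi * \phi)_k = \sum_{j} \psi_j \phi_{k-j}$ satisfies $\sum_k \langle k \rangle^{2t} (\psi*\phi)_k^2 \leq C^2 \left(\sum_k \langle k\rangle^{2r}\psi_k^2\right)\left(\sum_k \langle k\rangle^{2s}\phi_k^2\right)$.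 -/
/-!
Write `x_k = 1 + k²`. Since `x_k ≤ 2 (x_j + x_{k-j})`, the weight `x_k^{t/2}` can be moved onto
one of the two factors of each term of the convolution, which reduces the claim to the unweighted
bound `∑_k (f * g)_k² ≤ Z (∑ x^ρ f²) (∑ x^σ g²)` with `(ρ, σ) = (r - t, s)` or `(r, s - t)`.
That bound is Cauchy–Schwarz with weight `x_j^ρ x_{k-j}^σ`, the resulting kernel
`∑_j x_j^{-ρ} x_{k-j}^{-σ}` being at most `Z = ∑_j x_j^{-(ρ+σ)}` by Hölder; `Z < ∞` because
`ρ + σ = r + s - t > 1/2`. Working in `ℝ≥0∞` spares all summability bookkeeping until the end.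
-/

open ENNReal

namespace ENNReal

theorem tsum_mul_le_Lp_mul_Lq {ι : Type*} (f g : ι → ℝ≥0∞) {p q : ℝ}
    (hpq : p.HolderConjugate q) :
    ∑' i, f i * g i ≤ (∑' i, f i ^ p) ^ (1 / p) * (∑' i, g i ^ q) ^ (1 / q) := by
  rw [ENNReal.tsum_eq_iSup_sum]
  refine iSup_le fun s => (inner_le_Lp_mul_Lq s f g hpq).trans ?_
  gcongr
  · exact one_div_nonneg.2 hpq.nonneg
  · exact ENNReal.sum_le_tsum s
  · exact one_div_nonneg.2 hpq.symm.nonneg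
  · exact ENNReal.sum_le_tsum s

theorem tsum_mul_sq_le {ι : Type*} (f g : ι → ℝ≥0∞) :
    (∑' i, f i * g i) ^ 2 ≤ (∑' i, f i ^ 2) * ∑' i, g i ^ 2 := by
  have h := tsum_mul_le_Lp_mul_Lq f g Real.HolderConjugate.two_two
  simp only [rpow_two] at h
  calc (∑' i, f i * g i) ^ 2
      ≤ ((∑' i, f i ^ 2) ^ (1 / 2 : ℝ) * (∑' i, g i ^ 2) ^ (1 / 2 : ℝ)) ^ 2 := by gcongr
    _ = (∑' i, f i ^ 2) * ∑' i, g i ^ 2 := by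
      rw [mul_pow, ← rpow_two, ← rpow_two, ← rpow_mul, ← rpow_mul]
      norm_num

theorem tsum_sq_le_tsum_mul_sq_mul_tsum_inv {ι : Type*} (c w : ι → ℝ≥0∞)
    (hw0 : ∀ i, w i ≠ 0) (hw : ∀ i, w i ≠ ⊤) :
    (∑' i, c i) ^ 2 ≤ (∑' i, w i * c i ^ 2) * ∑' i, (w i)⁻¹ := by
  have hsplit : ∀ i, c i = (w i ^ (1 / 2 : ℝ) * c i) * (w i ^ (1 / 2 : ℝ))⁻¹ := fun i => by
    rw [mul_right_comm, ENNReal.mul_inv_cancel (by simp [hw0 i]) (by simp [hw i]), one_mul]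
  have hsq : ∀ x : ℝ≥0∞, (x ^ (1 / 2 : ℝ)) ^ 2 = x := fun x => by
    rw [← rpow_two, ← rpow_mul]; norm_num
  calc (∑' i, c i) ^ 2 = (∑' i, (w i ^ (1 / 2 : ℝ) * c i) * (w i ^ (1 / 2 : ℝ))⁻¹) ^ 2 := by
        rw [tsum_congr hsplit]
    _ ≤ _ := tsum_mul_sq_le _ _
    _ = _ := by simp only [mul_pow, ← ENNReal.inv_pow, hsq]

theorem rpow_add_le_two_rpow_mul_add_rpow (x y : ℝ≥0∞) {e : ℝ} (he : 0 ≤ e) :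
    (x + y) ^ e ≤ 2 ^ e * (x ^ e + y ^ e) := by
  wlog hxy : x ≤ y generalizing x y
  · simpa only [add_comm] using this y x (le_of_not_ge hxy)
  calc (x + y) ^ e ≤ (2 * y) ^ e := by gcongr; rw [two_mul]; gcongr
    _ = 2 ^ e * y ^ e := mul_rpow_of_nonneg _ _ he
    _ ≤ 2 ^ e * (x ^ e + y ^ e) := by gcongr; exact le_add_self

theorem tsum_tsum_mul_sub {G : Type*} [AddCommGroup G] (f g : G → ℝ≥0∞) :
    ∑' k, ∑' j, f j * g (k - j) = (∑' j, f j) * ∑' j, g j := by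
  rw [ENNReal.tsum_comm, ← ENNReal.tsum_mul_right]
  refine tsum_congr fun j => ?_
  rw [ENNReal.tsum_mul_left, ← (Equiv.subRight j).tsum_eq g]
  rfl

end ENNReal

noncomputable def bracketSq (k : ℤ) : ℝ≥0∞ := ENNReal.ofReal (1 + (k : ℝ) ^ 2)

theorem bracketSq_ne_zero (k : ℤ) : bracketSq k ≠ 0 := by
  rw [bracketSq, Ne, ENNReal.ofReal_eq_zero, not_le]; positivity

theorem bracketSq_ne_top (k : ℤ) : bracketSq k ≠ ⊤ := ENNReal.ofReal_ne_top

theorem bracketSq_zero : bracketSq 0 = 1 := by simp [bracketSq]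

theorem bracketSq_rpow_ne_zero (e : ℝ) (k : ℤ) : bracketSq k ^ e ≠ 0 := by
  simp [bracketSq_ne_zero, bracketSq_ne_top]

theorem bracketSq_rpow_ne_top (e : ℝ) (k : ℤ) : bracketSq k ^ e ≠ ⊤ := by
  simp [bracketSq_ne_zero, bracketSq_ne_top]

theorem bracketSq_rpow_mul_rpow (a b : ℝ) (k : ℤ) :
    bracketSq k ^ a * bracketSq k ^ b = bracketSq k ^ (a + b) :=
  (rpow_add a b (bracketSq_ne_zero k) (bracketSq_ne_top k)).symm

theorem ofReal_rpow_mul_sq (e : ℝ) (k : ℤ) (y : ℝ) :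
    ENNReal.ofReal ((1 + (k : ℝ) ^ 2) ^ e * y ^ 2) = bracketSq k ^ e * ‖y‖ₑ ^ 2 := by
  rw [ENNReal.ofReal_mul (by positivity), bracketSq, ENNReal.ofReal_rpow_of_pos (by positivity),
    Real.enorm_eq_ofReal_abs, ← ENNReal.ofReal_pow (abs_nonneg y), sq_abs]

theorem bracketSq_le_two_mul_add (j k : ℤ) :
    bracketSq k ≤ 2 * (bracketSq j + bracketSq (k - j)) := by
  rw [bracketSq, bracketSq, bracketSq, ← ENNReal.ofReal_add (by positivity) (by positivity),
    ← ENNReal.ofReal_ofNat 2, ← ENNReal.ofReal_mul zero_le_two]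
  refine ENNReal.ofReal_le_ofReal ?_
  push_cast
  nlinarith [sq_nonneg ((j : ℝ) - (k - j))]

theorem bracketSq_rpow_le {e : ℝ} (he : 0 ≤ e) (j k : ℤ) :
    bracketSq k ^ e ≤ 4 ^ e * (bracketSq j ^ e + bracketSq (k - j) ^ e) :=
  calc bracketSq k ^ e ≤ (2 * (bracketSq j + bracketSq (k - j))) ^ e := by
        gcongr; exact bracketSq_le_two_mul_add j k
    _ = 2 ^ e * (bracketSq j + bracketSq (k - j)) ^ e := mul_rpow_of_nonneg _ _ he
    _ ≤ 2 ^ e * (2 ^ e * (bracketSq j ^ e + bracketSq (k - j) ^ e)) := by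
        gcongr; exact rpow_add_le_two_rpow_mul_add_rpow _ _ he
    _ = 4 ^ e * (bracketSq j ^ e + bracketSq (k - j) ^ e) := by
        rw [← mul_assoc, ← mul_rpow_of_nonneg _ _ he]; norm_num

theorem summable_one_add_sq_rpow_neg {γ : ℝ} (hγ : 1 / 2 < γ) :
    Summable fun j : ℤ => (1 + (j : ℝ) ^ 2) ^ (-γ) := by
  refine Summable.of_norm_bounded_eventually
    (Real.summable_abs_int_rpow (b := 2 * γ) (by linarith)) ?_
  filter_upwards [Filter.eventually_cofinite_ne 0] with j hj
  have hj1 : (1 : ℝ) ≤ |(j : ℝ)| := by exact_mod_cast Int.one_le_abs hj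
  rw [Real.norm_of_nonneg (by positivity), Real.rpow_neg (by positivity),
    Real.rpow_neg (by positivity), Real.rpow_mul (abs_nonneg _), Real.rpow_two, sq_abs]
  gcongr
  linarith

theorem tsum_bracketSq_rpow_neg_ne_top {γ : ℝ} (hγ : 1 / 2 < γ) :
    ∑' j, bracketSq j ^ (-γ) ≠ ⊤ := by
  have hterm : ∀ j, bracketSq j ^ (-γ) = ENNReal.ofReal ((1 + (j : ℝ) ^ 2) ^ (-γ)) := fun j => by
    rw [bracketSq, ENNReal.ofReal_rpow_of_pos (by positivity)]
  rw [tsum_congr hterm, ← ENNReal.ofReal_tsum_of_nonneg (fun j => by positivity)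
    (summable_one_add_sq_rpow_neg hγ)]
  exact ENNReal.ofReal_ne_top

theorem tsum_bracketSq_rpow_neg_mul_le {α β : ℝ} (hα : 0 < α) (hβ : 0 < β) (k : ℤ) :
    ∑' j, bracketSq j ^ (-α) * bracketSq (k - j) ^ (-β) ≤ ∑' j, bracketSq j ^ (-(α + β)) := by
  have hpq : Real.HolderConjugate ((α + β) / α) ((α + β) / β) :=
    ⟨by rw [inv_div, inv_div, ← add_div, div_self (by positivity), inv_one], by positivity,
      by positivity⟩
  have hα' : ∀ j, (bracketSq j ^ (-α)) ^ ((α + β) / α) = bracketSq j ^ (-(α + β)) := fun j => by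
    rw [← rpow_mul]; congr 1; field_simp
  have hβ' : ∀ j, (bracketSq j ^ (-β)) ^ ((α + β) / β) = bracketSq j ^ (-(α + β)) := fun j => by
    rw [← rpow_mul]; congr 1; field_simp
  calc ∑' j, bracketSq j ^ (-α) * bracketSq (k - j) ^ (-β)
      ≤ (∑' j, bracketSq j ^ (-(α + β))) ^ (1 / ((α + β) / α)) *
          (∑' j, bracketSq (k - j) ^ (-(α + β))) ^ (1 / ((α + β) / β)) := by
        simpa only [hα', hβ'] using tsum_mul_le_Lp_mul_Lq (fun j => bracketSq j ^ (-α))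
          (fun j => bracketSq (k - j) ^ (-β)) hpq
    _ = (∑' j, bracketSq j ^ (-(α + β))) ^ (1 / ((α + β) / α) + 1 / ((α + β) / β)) := by
        rw [← (Equiv.subLeft k).tsum_eq fun j => bracketSq j ^ (-(α + β)),
          rpow_add_of_nonneg _ _ (by positivity) (by positivity)]
        rfl
    _ = ∑' j, bracketSq j ^ (-(α + β)) := by
        rw [one_div_div, one_div_div, ← add_div, div_self (by positivity), rpow_one]

theorem tsum_conv_sq_le (a b : ℤ → ℝ≥0∞) {ρ σ : ℝ} (hρ : 0 < ρ) (hσ : 0 < σ) :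
    ∑' k, (∑' j, a j * b (k - j)) ^ 2 ≤ (∑' j, bracketSq j ^ (-(ρ + σ))) *
      ((∑' j, bracketSq j ^ ρ * a j ^ 2) * ∑' j, bracketSq j ^ σ * b j ^ 2) := by
  have hk : ∀ k, (∑' j, a j * b (k - j)) ^ 2 ≤
      (∑' j, (bracketSq j ^ ρ * a j ^ 2) * (bracketSq (k - j) ^ σ * b (k - j) ^ 2)) *
        ∑' j, bracketSq j ^ (-(ρ + σ)) := fun k =>
    calc (∑' j, a j * b (k - j)) ^ 2
        ≤ (∑' j, bracketSq j ^ ρ * bracketSq (k - j) ^ σ * (a j * b (k - j)) ^ 2) *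
            ∑' j, (bracketSq j ^ ρ * bracketSq (k - j) ^ σ)⁻¹ :=
          tsum_sq_le_tsum_mul_sq_mul_tsum_inv _ _
            (fun j => mul_ne_zero (bracketSq_rpow_ne_zero _ _) (bracketSq_rpow_ne_zero _ _))
            (fun j => mul_ne_top (bracketSq_rpow_ne_top _ _) (bracketSq_rpow_ne_top _ _))
      _ ≤ _ := by
          refine mul_le_mul' (le_of_eq (tsum_congr fun j => by ring)) ?_
          simp only [ENNReal.mul_inv (Or.inl (bracketSq_rpow_ne_zero _ _))
              (Or.inl (bracketSq_rpow_ne_top _ _)), ← rpow_neg]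
          exact tsum_bracketSq_rpow_neg_mul_le hρ hσ k
  calc ∑' k, (∑' j, a j * b (k - j)) ^ 2
      ≤ ∑' k, (∑' j, (bracketSq j ^ ρ * a j ^ 2) * (bracketSq (k - j) ^ σ * b (k - j) ^ 2)) *
          ∑' j, bracketSq j ^ (-(ρ + σ)) := ENNReal.tsum_le_tsum hk
    _ = _ := by
        rw [ENNReal.tsum_mul_right, ENNReal.tsum_tsum_mul_sub
          (fun j => bracketSq j ^ ρ * a j ^ 2) (fun j => bracketSq j ^ σ * b j ^ 2), mul_comm]

theorem bracketSq_rpow_mul_tsum_conv_le {e : ℝ} (he : 0 ≤ e) (a b : ℤ → ℝ≥0∞) (k : ℤ) :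
    bracketSq k ^ e * ∑' j, a j * b (k - j) ≤
      4 ^ e * (∑' j, (bracketSq j ^ e * a j) * b (k - j) +
        ∑' j, a j * (bracketSq (k - j) ^ e * b (k - j))) :=
  calc bracketSq k ^ e * ∑' j, a j * b (k - j)
      = ∑' j, bracketSq k ^ e * (a j * b (k - j)) := ENNReal.tsum_mul_left.symm
    _ ≤ ∑' j, 4 ^ e * (bracketSq j ^ e + bracketSq (k - j) ^ e) * (a j * b (k - j)) :=
        ENNReal.tsum_le_tsum fun j => by gcongr; exact bracketSq_rpow_le he j k
    _ = _ := by
        rw [← ENNReal.tsum_add, ← ENNReal.tsum_mul_left]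
        exact tsum_congr fun j => by ring

theorem bracketSq_rpow_mul_sq (u e : ℝ) (j : ℤ) (c : ℝ≥0∞) :
    bracketSq j ^ u * (bracketSq j ^ e * c) ^ 2 = bracketSq j ^ (u + 2 * e) * c ^ 2 := by
  rw [mul_pow, ← mul_assoc, ← rpow_two, ← rpow_mul, bracketSq_rpow_mul_rpow, mul_comm e]

theorem tsum_bracketSq_rpow_mul_conv_sq_le {r s t : ℝ} (ht : 0 ≤ t) (hrt : t < r) (hst : t < s)
    (a b : ℤ → ℝ≥0∞) :
    ∑' k, bracketSq k ^ t * (∑' j, a j * b (k - j)) ^ 2 ≤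
      8 * 4 ^ t * (∑' j, bracketSq j ^ (-(r + s - t))) *
        ((∑' j, bracketSq j ^ r * a j ^ 2) * ∑' j, bracketSq j ^ s * b j ^ 2) := by
  set Z := ∑' j, bracketSq j ^ (-(r + s - t))
  set P := (∑' j, bracketSq j ^ r * a j ^ 2) * ∑' j, bracketSq j ^ s * b j ^ 2
  set S₁ := fun k => ∑' j, (bracketSq j ^ (t / 2) * a j) * b (k - j)
  set S₂ := fun k => ∑' j, a j * (bracketSq (k - j) ^ (t / 2) * b (k - j))
  have hS₁ : ∑' k, S₁ k ^ 2 ≤ Z * P := by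
    have h := tsum_conv_sq_le (fun j => bracketSq j ^ (t / 2) * a j) b (sub_pos.2 hrt)
      (ht.trans_lt hst)
    simpa only [bracketSq_rpow_mul_sq, show r - t + 2 * (t / 2) = r by ring,
      show r - t + s = r + s - t by ring] using h
  have hS₂ : ∑' k, S₂ k ^ 2 ≤ Z * P := by
    have h := tsum_conv_sq_le a (fun j => bracketSq j ^ (t / 2) * b j) (ht.trans_lt hrt)
      (sub_pos.2 hst)
    simpa only [bracketSq_rpow_mul_sq, show s - t + 2 * (t / 2) = s by ring,
      show r + (s - t) = r + s - t by ring] using h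
  have hk : ∀ k, bracketSq k ^ t * (∑' j, a j * b (k - j)) ^ 2 ≤
      4 ^ t * (4 * (S₁ k ^ 2 + S₂ k ^ 2)) := fun k => by
    have hsq : ∀ c : ℝ≥0∞, (c ^ (t / 2)) ^ 2 = c ^ t := fun c => by
      rw [← rpow_two, ← rpow_mul, div_mul_cancel₀ t two_ne_zero]
    have hadd : (S₁ k + S₂ k) ^ 2 ≤ 4 * (S₁ k ^ 2 + S₂ k ^ 2) := by
      simpa only [rpow_two, show (2 : ℝ≥0∞) ^ 2 = 4 by norm_num] using
        rpow_add_le_two_rpow_mul_add_rpow (S₁ k) (S₂ k) zero_le_two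
    calc bracketSq k ^ t * (∑' j, a j * b (k - j)) ^ 2
        = (bracketSq k ^ (t / 2) * ∑' j, a j * b (k - j)) ^ 2 := by rw [mul_pow, hsq]
      _ ≤ (4 ^ (t / 2) * (S₁ k + S₂ k)) ^ 2 := by
          gcongr ?_ ^ 2; exact bracketSq_rpow_mul_tsum_conv_le (by positivity) a b k
      _ ≤ 4 ^ t * (4 * (S₁ k ^ 2 + S₂ k ^ 2)) := by rw [mul_pow, hsq]; gcongr
  calc ∑' k, bracketSq k ^ t * (∑' j, a j * b (k - j)) ^ 2
      ≤ ∑' k, 4 ^ t * (4 * (S₁ k ^ 2 + S₂ k ^ 2)) := ENNReal.tsum_le_tsum hk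
    _ ≤ 4 ^ t * (4 * (Z * P + Z * P)) := by
        rw [ENNReal.tsum_mul_left, ENNReal.tsum_mul_left, ENNReal.tsum_add]
        gcongr
    _ = 8 * 4 ^ t * Z * P := by ring

theorem tsum_bracketSq_rpow_mul_enorm_sq {e : ℝ} {ψ : ℤ → ℝ}
    (hψ : Summable fun k : ℤ => (1 + (k : ℝ) ^ 2) ^ e * ψ k ^ 2) :
    ∑' k, bracketSq k ^ e * ‖ψ k‖ₑ ^ 2 =
      ENNReal.ofReal (∑' k : ℤ, (1 + (k : ℝ) ^ 2) ^ e * ψ k ^ 2) := by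
  rw [ENNReal.ofReal_tsum_of_nonneg (fun k => by positivity) hψ]
  simp only [ofReal_rpow_mul_sq]

theorem ofReal_rpow_mul_tsum_sq_le (e : ℝ) (ψ φ : ℤ → ℝ) (k : ℤ) :
    ENNReal.ofReal ((1 + (k : ℝ) ^ 2) ^ e * (∑' j, ψ j * φ (k - j)) ^ 2) ≤
      bracketSq k ^ e * (∑' j, ‖ψ j‖ₑ * ‖φ (k - j)‖ₑ) ^ 2 := by
  rw [ofReal_rpow_mul_sq]
  gcongr
  simpa only [enorm_mul] using enorm_tsum_le_tsum_enorm (f := fun j => ψ j * φ (k - j))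

theorem tsum_le_of_tsum_ofReal_le {ι : Type*} {f : ι → ℝ} (hf : ∀ i, 0 ≤ f i) {c : ℝ}
    (hc : 0 ≤ c) (h : ∑' i, ENNReal.ofReal (f i) ≤ ENNReal.ofReal c) : ∑' i, f i ≤ c := by
  have := ENNReal.toReal_le_of_le_ofReal hc h
  rwa [ENNReal.tsum_toReal_eq fun _ => ofReal_ne_top,
    tsum_congr fun i => toReal_ofReal (hf i)] at this

theorem stmt_15_general (r s t : ℝ) (hr : r < 1/2) (hs : s < 1/2)
    (ht0 : 0 < t) (hts : t < r + s - 1/2) :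
    ∃ C : ℝ, 0 < C ∧ ∀ ψ φ : ℤ → ℝ,
      Summable (fun k : ℤ => (1 + (k : ℝ)^2) ^ r * (ψ k)^2) →
      Summable (fun k : ℤ => (1 + (k : ℝ)^2) ^ s * (φ k)^2) →
      ∑' k : ℤ, (1 + (k : ℝ)^2) ^ t * (∑' j : ℤ, ψ j * φ (k - j))^2
        ≤ C^2 * (∑' k : ℤ, (1 + (k : ℝ)^2) ^ r * (ψ k)^2) *
            (∑' k : ℤ, (1 + (k : ℝ)^2) ^ s * (φ k)^2) := by
  set K : ℝ≥0∞ := 8 * 4 ^ t * ∑' j, bracketSq j ^ (-(r + s - t))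
  have hK : K ≠ ⊤ := mul_ne_top (mul_ne_top (by simp) (by simp))
    (tsum_bracketSq_rpow_neg_ne_top (by linarith))
  have hK₀ : K ≠ 0 := mul_ne_zero (by simp) <| ne_of_gt <|
    calc 0 < bracketSq 0 ^ (-(r + s - t)) := by simp [bracketSq_zero]
      _ ≤ _ := ENNReal.le_tsum (0 : ℤ)
  refine ⟨√K.toReal, Real.sqrt_pos.2 (toReal_pos hK₀ hK), fun ψ φ hψ hφ => ?_⟩
  rw [Real.sq_sqrt toReal_nonneg, mul_assoc]
  refine tsum_le_of_tsum_ofReal_le (fun k => by positivity) (by positivity) ?_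
  calc ∑' k : ℤ, ENNReal.ofReal ((1 + (k : ℝ) ^ 2) ^ t * (∑' j, ψ j * φ (k - j)) ^ 2)
      ≤ ∑' k, bracketSq k ^ t * (∑' j, ‖ψ j‖ₑ * ‖φ (k - j)‖ₑ) ^ 2 :=
        ENNReal.tsum_le_tsum (ofReal_rpow_mul_tsum_sq_le t ψ φ)
    _ ≤ K * ((∑' k, bracketSq k ^ r * ‖ψ k‖ₑ ^ 2) * ∑' k, bracketSq k ^ s * ‖φ k‖ₑ ^ 2) :=
        tsum_bracketSq_rpow_mul_conv_sq_le ht0.le (by linarith) (by linarith) _ _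
    _ = _ := by
        rw [tsum_bracketSq_rpow_mul_enorm_sq hψ, tsum_bracketSq_rpow_mul_enorm_sq hφ,
          ENNReal.ofReal_mul toReal_nonneg, ofReal_toReal hK,
          ENNReal.ofReal_mul (tsum_nonneg fun k => by positivity)]

/-- Young-type inequality in fractional Sobolev spaces on the torus, in Fourier
coordinates: for `r,s,t ∈ (0,1/2)` with `t < r + s - 1/2`,
`‖ψ * φ‖_{H^t} ≤ C ‖ψ‖_{H^r} ‖φ‖_{H^s}`, where `⟨k⟩² = 1 + k²`. -/
theorem stmt_15 (r s t : ℝ) (hr0 : 0 < r) (hr : r < 1/2) (hs0 : 0 < s) (hs : s < 1/2)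
    (ht0 : 0 < t) (ht : t < 1/2) (hts : t < r + s - 1/2) :
    ∃ C : ℝ, 0 < C ∧ ∀ ψ φ : ℤ → ℝ,
      Summable (fun k : ℤ => (1 + (k : ℝ)^2) ^ r * (ψ k)^2) →
      Summable (fun k : ℤ => (1 + (k : ℝ)^2) ^ s * (φ k)^2) →
      ∑' k : ℤ, (1 + (k : ℝ)^2) ^ t * (∑' j : ℤ, ψ j * φ (k - j))^2
        ≤ C^2 * (∑' k : ℤ, (1 + (k : ℝ)^2) ^ r * (ψ k)^2) *
            (∑' k : ℤ, (1 + (k : ℝ)^2) ^ s * (φ k)^2) :=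
  stmt_15_general r s t hr hs ht0 hts
end

section
/- Let $\bar a : [-T_0, T_0] \to \mathbb{R}$ be continuous with $\bar a(t) \asymp -(|t| \vee \sqrt{\delta \vee \varepsilon})$ for all $t$, and let $\zeta$ solve $\varepsilon \zeta'(t) = 2\bar a(t)\zeta(t) + 1$ with $\zeta(-T_0) = 1/(2|\bar a(-T_0)|)$. Then $\zeta(t) \asymp \frac{1}{|\bar a(t)|} \asymp \frac{1}{|t| \vee \sqrt{\delta \vee \varepsilon}}$ uniformly for $t \in [-T_0, T_0]$, for $\varepsilon, \delta$ small enough. -/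
open intervalIntegral Real MeasureTheory
set_option maxHeartbeats 1000000

private lemma expIntLe (k a b : ℝ) (hk : 0 < k) :
    ∫ s in a..b, Real.exp (k*(s-b)) ≤ 1/k := by
  have h : ∀ s ∈ Set.uIcc a b, HasDerivAt (fun s => Real.exp (k*(s-b))/k) (Real.exp (k*(s-b))) s := by
    intro s _
    have : HasDerivAt (fun s => k*(s-b)) k s := by
      simpa using ((hasDerivAt_id s).sub_const b).const_mul k
    have := (this.exp).div_const k
    simpa [mul_div_assoc, mul_comm, mul_div_cancel_left₀ _ hk.ne'] using this
  have := intervalIntegral.integral_eq_sub_of_hasDerivAt h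
    ((Real.continuous_exp.comp (by continuity)).intervalIntegrable a b)
  rw [this]
  have h1 : Real.exp (k*(b-b)) = 1 := by simp
  rw [h1]
  have : 0 ≤ Real.exp (k*(a-b))/k := by positivity
  linarith [div_sub_div_same 1 (Real.exp (k*(a-b))), this]

private lemma lemA (r s t : ℝ) (hr : 0 ≤ r) (hst : s ≤ t) :
    (|t| ⊔ r) * (t - s) / 4 ≤ ∫ u in s..t, (|u| ⊔ r) := by
  have hm : Continuous (fun u : ℝ => |u| ⊔ r) := continuous_abs.max continuous_const
  have hint : ∀ p q : ℝ, IntervalIntegrable (fun u : ℝ => |u| ⊔ r) MeasureTheory.volume p q :=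
    fun p q => hm.intervalIntegrable p q
  rcases le_or_gt |t| r with h | h
  · have : r * (t - s) = ∫ u in s..t, r := by simp [mul_comm]
    have hle : ∫ u in s..t, (r:ℝ) ≤ ∫ u in s..t, (|u| ⊔ r) :=
      intervalIntegral.integral_mono_on hst (intervalIntegrable_const) (hint s t)
        (fun u _ => le_max_right _ _)
    have hmt : |t| ⊔ r = r := max_eq_right h
    rw [hmt]
    nlinarith [this, hle]
  · rcases le_or_gt t 0 with ht | ht
    · have hmt : |t| ⊔ r = |t| := max_eq_left h.le
      have hle : ∫ u in s..t, |t| ≤ ∫ u in s..t, (|u| ⊔ r) := by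
        apply intervalIntegral.integral_mono_on hst intervalIntegrable_const (hint s t)
        intro u hu
        have : |t| ≤ |u| := by
          rw [abs_of_nonpos ht, abs_of_nonpos (hu.2.trans ht)]
          linarith [hu.2]
        exact this.trans (le_max_left _ _)
      rw [hmt]
      have : ∫ u in s..t, |t| = |t| * (t - s) := by simp [mul_comm]
      nlinarith [hle, this, abs_nonneg t, sub_nonneg.2 hst]
    · have hmt : |t| ⊔ r = t := by rw [max_eq_left h.le, abs_of_pos ht]
      rw [hmt]
      rcases le_or_gt 0 s with hs | hs
      · have hle : ∫ u in s..t, u ≤ ∫ u in s..t, (|u| ⊔ r) := by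
          apply intervalIntegral.integral_mono_on hst (intervalIntegrable_id) (hint s t)
          intro u hu
          exact (le_abs_self u).trans (le_max_left _ _)
        rw [integral_id] at hle
        nlinarith
      · have hsplit : (∫ u in s..(0:ℝ), (|u| ⊔ r)) + ∫ u in (0:ℝ)..t, (|u| ⊔ r) = ∫ u in s..t, (|u| ⊔ r) :=
          intervalIntegral.integral_add_adjacent_intervals (hint s 0) (hint 0 t)
        have h1 : ∫ u in s..(0:ℝ), -u ≤ ∫ u in s..(0:ℝ), (|u| ⊔ r) := by
          apply intervalIntegral.integral_mono_on hs.le ((continuous_id.neg).intervalIntegrable s 0) (hint s 0)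
          intro u hu
          exact (neg_le_abs u).trans (le_max_left _ _)
        have h2 : ∫ u in (0:ℝ)..t, u ≤ ∫ u in (0:ℝ)..t, (|u| ⊔ r) := by
          apply intervalIntegral.integral_mono_on ht.le intervalIntegrable_id (hint 0 t)
          intro u hu
          exact (le_abs_self u).trans (le_max_left _ _)
        have e1 : ∫ u in s..(0:ℝ), -u = s^2/2 := by
          rw [intervalIntegral.integral_neg, integral_id]; ring
        have e2 : ∫ u in (0:ℝ)..t, u = t^2/2 := by rw [integral_id]; ring
        rw [e1] at h1; rw [e2] at h2
        nlinarith [sq_nonneg (t + s/2), sq_nonneg s]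

/-- The variance-related function `ζ` solving `εζ' = 2āζ + 1`,
`ζ(-T₀) = 1/(2|ā(-T₀)|)`, with `ā(t) ≍ -(|t| ∨ √(δ∨ε))`, satisfies
`ζ(t) ≍ 1/|ā(t)| ≍ 1/(|t| ∨ √(δ∨ε))` uniformly on `[-T₀,T₀]`, for `ε, δ`
small enough, with constants depending only on `T₀` and the comparison
constants for `ā`. -/
theorem stmt_19 (T0 c1 c2 : ℝ) (hT0 : 0 < T0) (hc1 : 0 < c1) (hc12 : c1 ≤ c2) :
    ∃ ε0 : ℝ, 0 < ε0 ∧ ∃ c1' c2' : ℝ, 0 < c1' ∧ 0 < c2' ∧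
      ∀ (ε δ : ℝ) (a ζ : ℝ → ℝ), 0 < ε → ε ≤ ε0 → 0 ≤ δ → δ ≤ ε0 →
        ContinuousOn a (Set.Icc (-T0) T0) →
        (∀ t ∈ Set.Icc (-T0) T0,
          c1 * (|t| ⊔ Real.sqrt (δ ⊔ ε)) ≤ -(a t) ∧
          -(a t) ≤ c2 * (|t| ⊔ Real.sqrt (δ ⊔ ε))) →
        (∀ t ∈ Set.Icc (-T0) T0, HasDerivAt ζ ((2 * a t * ζ t + 1) / ε) t) →
        ζ (-T0) = 1 / (2 * |a (-T0)|) →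
        ∀ t ∈ Set.Icc (-T0) T0,
          c1' / (|t| ⊔ Real.sqrt (δ ⊔ ε)) ≤ ζ t ∧
          ζ t ≤ c2' / (|t| ⊔ Real.sqrt (δ ⊔ ε)) ∧
          c1' / |a t| ≤ ζ t ∧ ζ t ≤ c2' / |a t| := by
  have hc2 : 0 < c2 := hc1.trans_le hc12
  set cL : ℝ := Real.exp (-(4*c2)) / (4*c2+1) with hcL_def
  have hcL : 0 < cL := by positivity
  refine ⟨1, one_pos, cL * min c1 1, 5/(2*c1) * max c2 1, by positivity, by positivity, ?_⟩
  intro ε δ a ζ hε hεe hδ hδe ha hcomp hode hinit t ht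
  set r : ℝ := Real.sqrt (δ ⊔ ε) with hr_def
  have hr0 : 0 < r := Real.sqrt_pos.2 (lt_sup_iff.2 (Or.inr hε))
  set m : ℝ → ℝ := fun u => |u| ⊔ r with hm_def
  have hm_cont : Continuous m := continuous_abs.max continuous_const
  have hm_int : ∀ p q : ℝ, IntervalIntegrable m volume p q := fun p q => hm_cont.intervalIntegrable p q
  have hm_pos : ∀ u, 0 < m u := fun u => lt_sup_iff.2 (Or.inr hr0)
  have hε_le : ε ≤ (m t)^2 := by
    have h1 : ε ≤ r^2 := by
      rw [hr_def, Real.sq_sqrt (le_trans hδ le_sup_left)]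
      exact le_sup_right
    have h2 : r ≤ m t := le_max_right _ _
    nlinarith [hr0]
  have hlip : ∀ u v : ℝ, m u ≤ m v + |u - v| := by
    intro u v
    apply max_le
    · calc |u| ≤ |v| + |u - v| := by
            have := abs_sub_abs_le_abs_sub u v; linarith [abs_nonneg (u-v)]
        _ ≤ m v + |u - v| := by gcongr; exact le_max_left _ _
    · calc r ≤ m v := le_max_right _ _
        _ ≤ m v + |u - v| := by linarith [abs_nonneg (u-v)]
  -- clamped extension of a
  set cl : ℝ → ℝ := fun x => max (-T0) (min T0 x) with hcl_def
  have hcl_mem : ∀ x, cl x ∈ Set.Icc (-T0) T0 := by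
    intro x
    constructor
    · exact le_max_left _ _
    · exact max_le (by linarith) (min_le_left _ _)
  have hcl_id : ∀ x ∈ Set.Icc (-T0) T0, cl x = x := by
    intro x hx
    rw [hcl_def]
    simp only
    rw [min_eq_right hx.2, max_eq_right hx.1]
  set b : ℝ → ℝ := fun x => a (cl x) with hb_def
  have hb_cont : Continuous b := by
    apply ha.comp_continuous
    · exact (continuous_const.max (continuous_const.min continuous_id))
    · exact hcl_mem
  have hb_eq : ∀ x ∈ Set.Icc (-T0) T0, b x = a x := fun x hx => by rw [hb_def]; simp only; rw [hcl_id x hx]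
  have hb_int : ∀ p q : ℝ, IntervalIntegrable b volume p q := fun p q => hb_cont.intervalIntegrable p q
  set A : ℝ → ℝ := fun x => ∫ u in (-T0)..x, b u with hA_def
  have hA_deriv : ∀ x, HasDerivAt A (b x) x := by
    intro x
    exact intervalIntegral.integral_hasDerivAt_right (hb_int _ _)
      (hb_cont.stronglyMeasurableAtFilter _ _) hb_cont.continuousAt
  have hA_cont : Continuous A := continuous_iff_continuousAt.2 fun x => (hA_deriv x).continuousAt
  have hA0 : A (-T0) = 0 := by rw [hA_def]; simp
  -- comparison of A-increments with m-integrals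
  have hAdiff : ∀ s, A t - A s = ∫ u in s..t, b u := by
    intro s
    rw [hA_def]
    exact intervalIntegral.integral_interval_sub_left (hb_int _ _) (hb_int _ _)
  have hAub : ∀ s, -T0 ≤ s → s ≤ t → A t - A s ≤ -c1 * ∫ u in s..t, m u := by
    intro s hs hst
    rw [hAdiff s]
    have hmono : ∫ u in s..t, b u ≤ ∫ u in s..t, (-c1) * m u := by
      apply intervalIntegral.integral_mono_on hst (hb_int _ _) ((continuous_const.mul hm_cont : Continuous fun u => (-c1) * m u).intervalIntegrable _ _)
      intro u hu
      have huI : u ∈ Set.Icc (-T0) T0 := ⟨le_trans hs hu.1, le_trans hu.2 ht.2⟩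
      rw [hb_eq u huI]
      have := (hcomp u huI).1
      simp only [Pi.mul_apply, hm_def]
      linarith
    rw [intervalIntegral.integral_const_mul] at hmono
    linarith
  have hAlb : ∀ s, -T0 ≤ s → s ≤ t → -c2 * (∫ u in s..t, m u) ≤ A t - A s := by
    intro s hs hst
    rw [hAdiff s]
    have hmono : ∫ u in s..t, (-c2) * m u ≤ ∫ u in s..t, b u := by
      apply intervalIntegral.integral_mono_on hst ((continuous_const.mul hm_cont : Continuous fun u => (-c2) * m u).intervalIntegrable _ _) (hb_int _ _)
      intro u hu
      have huI : u ∈ Set.Icc (-T0) T0 := ⟨le_trans hs hu.1, le_trans hu.2 ht.2⟩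
      rw [hb_eq u huI]
      have := (hcomp u huI).2
      simp only [Pi.mul_apply, hm_def]
      linarith
    rw [intervalIntegral.integral_const_mul] at hmono
    linarith
  -- the explicit formula
  have hg_deriv : ∀ x ∈ Set.Icc (-T0) T0,
      HasDerivAt (fun y => ζ y * Real.exp (-2 * A y / ε)) (Real.exp (-2 * A x / ε) / ε) x := by
    intro x hx
    have h1 := hode x hx
    have hA' : HasDerivAt (fun y => -2 * A y / ε) (-2 * a x / ε) x := by
      have := ((hA_deriv x).const_mul (-2)).div_const ε
      rwa [hb_eq x hx] at this
    have h2 := hA'.exp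
    have h3 := h1.mul h2
    convert h3 using 1
    · rfl
    · rfl
    · rfl
    have hεne : (ε:ℝ) ≠ 0 := ne_of_gt hε
    field_simp
    ring
  have hζT0_pos : 0 ≤ ζ (-T0) := by
    rw [hinit]; positivity
  have hmT0 : -T0 ∈ Set.Icc (-T0) T0 := ⟨le_refl _, by linarith⟩
  have haT0 : |a (-T0)| = -(a (-T0)) := by
    have := (hcomp _ hmT0).1
    have hma : 0 < -(a (-T0)) := lt_of_lt_of_le (by positivity) this
    rw [abs_of_neg (by linarith)]
  have hkey : ζ t * Real.exp (-2 * A t / ε) - ζ (-T0) = ∫ s in (-T0)..t, Real.exp (-2 * A s / ε) / ε := by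
    have huIcc : Set.uIcc (-T0) t ⊆ Set.Icc (-T0) T0 := by
      rw [Set.uIcc_of_le ht.1]
      exact Set.Icc_subset_Icc (le_refl _) ht.2
    have := intervalIntegral.integral_eq_sub_of_hasDerivAt
      (fun s hs => hg_deriv s (huIcc hs))
      (((Real.continuous_exp.comp ((continuous_const.mul hA_cont).div_const ε : Continuous fun y => (-2) * A y / ε)).div_const ε).intervalIntegrable (-T0) t)
    rw [this, hA0]
    norm_num
  have hformula : ζ t = Real.exp (2 * A t / ε) * ζ (-T0)
      + ∫ s in (-T0)..t, Real.exp (2 * (A t - A s) / ε) / ε := by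
    have hE : Real.exp (2 * A t / ε) * Real.exp (-2 * A t / ε) = 1 := by
      rw [← Real.exp_add, show 2 * A t / ε + -2 * A t / ε = 0 by ring, Real.exp_zero]
    have h2 : ∀ s : ℝ, Real.exp (2 * A t / ε) * (Real.exp (-2 * A s / ε) / ε)
        = Real.exp (2 * (A t - A s) / ε) / ε := by
      intro s
      rw [mul_div_assoc', ← Real.exp_add]
      congr 1
      field_simp
      ring
    have h4 : (∫ s in (-T0)..t, Real.exp (2 * A t / ε) * (Real.exp (-2 * A s / ε) / ε))
        = ∫ s in (-T0)..t, Real.exp (2 * (A t - A s) / ε) / ε :=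
      intervalIntegral.integral_congr (fun s _ => h2 s)
    have h6 : Real.exp (2 * A t / ε) * (∫ s in (-T0)..t, Real.exp (-2 * A s / ε) / ε)
        = ∫ s in (-T0)..t, Real.exp (2 * (A t - A s) / ε) / ε := by
      rw [← h4]
      exact (intervalIntegral.integral_const_mul _ _).symm
    have h8 := congrArg (fun x => Real.exp (2 * A t / ε) * x) hkey
    rw [← h6]
    linear_combination h8 - ζ t * hE
  -- basic facts
  have hmt := hm_pos t
  have hIcc_nonneg : 0 ≤ ∫ u in (-T0)..t, m u :=
    intervalIntegral.integral_nonneg ht.1 (fun u _ => (hm_pos u).le)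
  have hmT0t : m t ≤ m (-T0) := by
    have h1 : |t| ≤ |(-T0)| := by
      rw [abs_neg, abs_of_pos hT0]
      exact abs_le.2 ⟨ht.1, ht.2⟩
    exact max_le_max h1 le_rfl
  have haT0_lb : c1 * m (-T0) ≤ |a (-T0)| := by rw [haT0]; exact (hcomp _ hmT0).1
  have haT0_ub : |a (-T0)| ≤ c2 * m (-T0) := by rw [haT0]; exact (hcomp _ hmT0).2
  have hcont2 : Continuous fun s => Real.exp (2 * (A t - A s) / ε) / ε :=
    (Real.continuous_exp.comp ((continuous_const.mul (continuous_const.sub hA_cont)).div_const ε)).div_const ε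
  -- upper bound
  have hterm1 : Real.exp (2 * A t / ε) * ζ (-T0) ≤ 1 / (2 * c1 * m t) := by
    have hAt : A t ≤ 0 := by
      have h := hAub (-T0) le_rfl ht.1
      rw [hA0] at h
      nlinarith [hIcc_nonneg]
    have hexp1 : Real.exp (2 * A t / ε) ≤ 1 := by
      apply Real.exp_le_one_iff.2
      have : 0 ≤ 2 / ε := by positivity
      calc 2 * A t / ε = (2/ε) * A t := by ring
        _ ≤ 0 := mul_nonpos_of_nonneg_of_nonpos this hAt
    have hz : ζ (-T0) ≤ 1 / (2 * c1 * m t) := by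
      rw [hinit]
      apply one_div_le_one_div_of_le (by positivity)
      calc 2 * c1 * m t ≤ 2 * c1 * m (-T0) := by nlinarith [hmT0t]
        _ ≤ 2 * |a (-T0)| := by nlinarith [haT0_lb]
    calc Real.exp (2 * A t / ε) * ζ (-T0) ≤ 1 * ζ (-T0) :=
          mul_le_mul_of_nonneg_right hexp1 hζT0_pos
      _ = ζ (-T0) := one_mul _
      _ ≤ 1 / (2 * c1 * m t) := hz
  have hterm2 : (∫ s in (-T0)..t, Real.exp (2 * (A t - A s) / ε) / ε) ≤ 2 / (c1 * m t) := by
    set k : ℝ := c1 * m t / (2 * ε) with hk_def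
    have hk : 0 < k := by positivity
    have hmono : (∫ s in (-T0)..t, Real.exp (2 * (A t - A s) / ε) / ε)
        ≤ ∫ s in (-T0)..t, Real.exp (k * (s - t)) / ε := by
      apply intervalIntegral.integral_mono_on ht.1 (hcont2.intervalIntegrable _ _)
        (((Real.continuous_exp.comp (continuous_const.mul (continuous_id.sub continuous_const) : Continuous fun s : ℝ => k * (s - t))).div_const ε).intervalIntegrable _ _)
      intro s hs
      have hlem : m t * (t - s) / 4 ≤ ∫ u in s..t, m u := lemA r s t hr0.le hs.2
      have hA := hAub s hs.1 hs.2
      have hexp : 2 * (A t - A s) / ε ≤ k * (s - t) := by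
        have h1 : A t - A s ≤ -c1 * (m t * (t - s) / 4) := by
          have := mul_le_mul_of_nonpos_left hlem (neg_nonpos.2 hc1.le)
          linarith [hA, this]
        have h2 : 2 * (-c1 * (m t * (t - s) / 4)) / ε = k * (s - t) := by
          rw [hk_def]; field_simp; ring
        calc 2 * (A t - A s) / ε ≤ 2 * (-c1 * (m t * (t - s) / 4)) / ε := by
              apply div_le_div_of_nonneg_right ?_ hε.le
              linarith
          _ = k * (s - t) := h2
      exact div_le_div_of_nonneg_right (Real.exp_le_exp.2 hexp) hε.le
    have hcomp2 : (∫ s in (-T0)..t, Real.exp (k * (s - t)) / ε) ≤ 2 / (c1 * m t) := by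
      rw [intervalIntegral.integral_div]
      have h1 := expIntLe k (-T0) t hk
      have h2 : (1/k) / ε = 2 / (c1 * m t) := by
        rw [hk_def]
        field_simp
      calc (∫ s in (-T0)..t, Real.exp (k * (s - t))) / ε ≤ (1/k) / ε :=
            div_le_div_of_nonneg_right h1 hε.le
        _ = 2 / (c1 * m t) := h2
    exact hmono.trans hcomp2
  have hupper : ζ t ≤ (5 / (2 * c1)) / m t := by
    rw [hformula]
    have : 1 / (2 * c1 * m t) + 2 / (c1 * m t) = (5 / (2 * c1)) / m t := by
      field_simp
      ring
    linarith [hterm1, hterm2]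
  -- lower bound
  have hIntNonneg : ∀ p q : ℝ, p ≤ q → 0 ≤ ∫ s in p..q, Real.exp (2 * (A t - A s) / ε) / ε :=
    fun p q hpq => intervalIntegral.integral_nonneg hpq (fun s _ => by positivity)
  set L : ℝ := ε / m t with hL_def
  have hL : 0 < L := by positivity
  have hLm : L ≤ m t := by
    rw [hL_def, div_le_iff₀ hmt]
    nlinarith [hε_le]
  have hLmt : L * m t = ε := by rw [hL_def]; field_simp
  have hexpLB : ∀ s, -T0 ≤ s → s ≤ t → t - s ≤ L → -(4*c2) ≤ 2 * (A t - A s) / ε := by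
    intro s hs hst hts
    have hub : ∫ u in s..t, m u ≤ 2 * ε := by
      have hpt : ∀ u ∈ Set.Icc s t, m u ≤ m t + L := by
        intro u hu
        have h1 := hlip u t
        have h2 : |u - t| = t - u := by
          rw [abs_sub_comm, abs_of_nonneg (by linarith [hu.2])]
        rw [h2] at h1
        linarith [hu.1]
      have h3 : ∫ u in s..t, m u ≤ ∫ u in s..t, (m t + L) :=
        intervalIntegral.integral_mono_on hst (hm_int _ _) intervalIntegrable_const hpt
      rw [intervalIntegral.integral_const, smul_eq_mul] at h3
      have h4 : (t - s) * (m t + L) ≤ 2 * ε := by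
        nlinarith [hLm, hLmt, hts, hL, hmt, sub_nonneg.2 hst]
      linarith
    have hAlb' := hAlb s hs hst
    have h3 : -c2 * (2*ε) ≤ -c2 * ∫ u in s..t, m u :=
      mul_le_mul_of_nonpos_left hub (neg_nonpos.2 hc2.le)
    rw [le_div_iff₀ hε]
    nlinarith [hAlb', h3]
  have hcLe : cL ≤ Real.exp (-(4*c2)) := by
    rw [hcL_def]
    exact div_le_self (Real.exp_pos _).le (by linarith)
  have hlower : cL / m t ≤ ζ t := by
    by_cases hcase : -T0 ≤ t - L
    · have hsplit : (∫ s in (-T0)..(t-L), Real.exp (2 * (A t - A s) / ε) / ε)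
          + (∫ s in (t-L)..t, Real.exp (2 * (A t - A s) / ε) / ε)
          = ∫ s in (-T0)..t, Real.exp (2 * (A t - A s) / ε) / ε :=
        intervalIntegral.integral_add_adjacent_intervals
          (hcont2.intervalIntegrable (-T0) (t-L)) (hcont2.intervalIntegrable (t-L) t)
      have h1 : 0 ≤ ∫ s in (-T0)..(t-L), Real.exp (2 * (A t - A s) / ε) / ε := by
        exact hIntNonneg (-T0) (t-L) hcase
      have h2 : (∫ s in (t-L)..t, Real.exp (-(4*c2)) / ε)
          ≤ ∫ s in (t-L)..t, Real.exp (2 * (A t - A s) / ε) / ε := by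
        apply intervalIntegral.integral_mono_on (by linarith) intervalIntegrable_const
          (hcont2.intervalIntegrable _ _)
        intro s hs
        exact div_le_div_of_nonneg_right
          (Real.exp_le_exp.2 (hexpLB s (by linarith [hs.1]) hs.2 (by linarith [hs.1]))) hε.le
      rw [intervalIntegral.integral_const, smul_eq_mul] at h2
      have h5 : (t - (t - L)) * (Real.exp (-(4*c2)) / ε) = Real.exp (-(4*c2)) / m t := by
        have : t - (t - L) = L := by ring
        rw [this, hL_def]
        field_simp
      rw [h5] at h2
      have h6 : cL / m t ≤ Real.exp (-(4*c2)) / m t :=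
        div_le_div_of_nonneg_right hcLe hmt.le
      rw [hformula, ← hsplit]
      linarith [mul_nonneg (Real.exp_pos (2 * A t / ε)).le hζT0_pos]
    · push_neg at hcase
      have hT0t : t + T0 < L := by linarith
      have hA_lb : -(4*c2) ≤ 2 * A t / ε := by
        have := hexpLB (-T0) le_rfl ht.1 (by linarith)
        rw [hA0, sub_zero] at this
        exact this
      have hmm : m (-T0) ≤ 2 * m t := by
        have h1 := hlip (-T0) t
        have h2 : |(-T0) - t| = t + T0 := by
          rw [show (-T0) - t = -(t + T0) by ring, abs_neg, abs_of_nonneg (by linarith [ht.1])]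
        rw [h2] at h1
        linarith [hLm, hT0t]
      have hz : 1 / (4 * c2 * m t) ≤ ζ (-T0) := by
        rw [hinit]
        apply one_div_le_one_div_of_le (by nlinarith [hmt, hc2])
        calc 2 * |a (-T0)| ≤ 2 * (c2 * m (-T0)) := by linarith [haT0_ub]
          _ ≤ 4 * c2 * m t := by nlinarith [hmm, hc2]
      have hi := hIntNonneg (-T0) t ht.1
      have hE2 : Real.exp (-(4*c2)) ≤ Real.exp (2 * A t / ε) := Real.exp_le_exp.2 hA_lb
      have hprod : Real.exp (-(4*c2)) * (1/(4*c2*m t)) ≤ Real.exp (2 * A t / ε) * ζ (-T0) :=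
        mul_le_mul hE2 hz (by positivity) (Real.exp_pos _).le
      have hcL2 : cL / m t ≤ Real.exp (-(4*c2)) * (1/(4*c2*m t)) := by
        have he1 : cL / m t = Real.exp (-(4*c2)) / ((4*c2+1) * m t) := by
          rw [hcL_def, div_div]
        have he2 : Real.exp (-(4*c2)) * (1/(4*c2*m t)) = Real.exp (-(4*c2)) / (4*c2*m t) := by
          ring
        rw [he1, he2]
        exact div_le_div_of_nonneg_left (Real.exp_pos _).le (by positivity) (by nlinarith [hmt])
      rw [hformula]
      linarith [hprod, hcL2, hi]
  -- conclusion
  have hcompt := hcomp t ht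
  have hat_neg : a t < 0 := by nlinarith [hcompt.1, hmt, hc1]
  have hat_abs : |a t| = -(a t) := abs_of_neg hat_neg
  have hma1 : c1 * m t ≤ |a t| := by rw [hat_abs]; exact hcompt.1
  have hma2 : |a t| ≤ c2 * m t := by rw [hat_abs]; exact hcompt.2
  have hat_pos : 0 < |a t| := lt_of_lt_of_le (by positivity) hma1
  refine ⟨?_, ?_, ?_, ?_⟩
  · refine le_trans ?_ hlower
    apply div_le_div_of_nonneg_right ?_ hmt.le
    exact mul_le_of_le_one_right hcL.le (min_le_right c1 1)
  · refine hupper.trans ?_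
    apply div_le_div_of_nonneg_right ?_ hmt.le
    exact le_mul_of_one_le_right (by positivity) (le_max_right c2 1)
  · rw [div_le_iff₀ hat_pos]
    have hζpos : 0 ≤ ζ t := le_trans (div_pos hcL hmt).le hlower
    have h1 : (cL / m t) * (c1 * m t) ≤ ζ t * |a t| :=
      mul_le_mul hlower hma1 (mul_pos hc1 hmt).le hζpos
    have h2 : (cL / m t) * (c1 * m t) = cL * c1 := by
      field_simp
    have h3 : cL * min c1 1 ≤ cL * c1 := mul_le_mul_of_nonneg_left (min_le_left _ _) hcL.le
    linarith
  · rw [le_div_iff₀ hat_pos]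
    have hζpos : 0 ≤ ζ t := le_trans (div_pos hcL hmt).le hlower
    have h1 : ζ t * |a t| ≤ ζ t * (c2 * m t) := mul_le_mul_of_nonneg_left hma2 hζpos
    have h2 : ζ t * (c2 * m t) ≤ ((5/(2*c1)) / m t) * (c2 * m t) :=
      mul_le_mul_of_nonneg_right hupper (mul_pos hc2 hmt).le
    have h3 : ((5/(2*c1)) / m t) * (c2 * m t) = 5/(2*c1) * c2 := by
      field_simp
    have h4 : 5/(2*c1) * c2 ≤ 5/(2*c1) * max c2 1 :=
      mul_le_mul_of_nonneg_left (le_max_left _ _) (by positivity)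
    linarith
end
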